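/- Let ∂_x, ∂_ξ, ∂_θ, ∂_z be the ℂ-linear endomorphisms of A_q defined on the PBW basis by ∂_x(x^m ξ^α θ^β z^n) = m x^{m−1} ξ^α θ^β z^n, ∂_ξ(x^m ξ^α θ^β z^n) = α q^m x^m θ^β z^n, ∂_θ(x^m ξ^α θ^β z^n) = β q^m x^m ξ^α z^n, ∂_z(x^m ξ^α θ^β z^n) = n (−q⁻¹)^{α+β} x^m ξ^α θ^β z^{n−1}. Then, as operators on A_q (with a generator u acting by left multiplication L_u), the following sixteen relations hold: ∂_x L_x = Id + L_x ∂_x; ∂_ξ L_x = q L_x ∂_ξ; ∂_θ L_x = q L_x ∂_θ; ∂_z L_x = L_x ∂_z; ∂_x L_ξ = q⁻¹ L_ξ ∂_x; ∂_ξ L_ξ = Id − L_ξ ∂_ξ; ∂_θ L_ξ = L_ξ ∂_θ; ∂_z L_ξ = −q⁻¹ L_ξ ∂_z; ∂_x L_θ = q⁻¹ L_θ ∂_x; ∂_ξ L_θ = L_θ ∂_ξ; ∂_θ L_θ = Id − L_θ ∂_θ; ∂_z L_θ = −q⁻¹ L_θ ∂_z; ∂_x L_z = L_z ∂_x; ∂_ξ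 L_z = −q L_z ∂_ξ; ∂_θ L_z = −q L_z ∂_θ; ∂_z L_z = Id + L_z ∂_z. -/

import Mathlib

/-!
The PBW monomials `x^m ξ^α θ^β z^n` span `A_q`: their span contains `1` and is stable under
left multiplication by each generator, because moving a generator to its place in a monomial
only produces a scalar (from the commutation relations) or zero (from `ξ² = θ² = 0`). Hence a
linear map on `A_q` is determined by its values on monomials, and each of the sixteen operator
identities reduces to a scalar identity on `x^m ξ^α θ^β z^n`, checked case by case in
`α, β ∈ {0, 1}` and, where `m - 1` or `n - 1` occurs, in `m` or `n` being zero.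
-/

open scoped TensorProduct

namespace DGQS

/-- The standard scalar product `⟨(a,b),(a',b')⟩ = aa' + bb'` on `ℤ₂ × ℤ₂`. -/
def pair2 (γ δ : ZMod 2 × ZMod 2) : ZMod 2 := γ.1 * δ.1 + γ.2 * δ.2

/-- The sign `(−1)^{⟨γ,δ⟩}`. -/
noncomputable def gsign (γ δ : ZMod 2 × ZMod 2) : ℂ := (-1 : ℂ) ^ (pair2 γ δ).val

/-- The defining relations of the double-graded quantum superplane, imposed on the free
algebra on four generators `x = ι 0`, `ξ = ι 1`, `θ = ι 2`, `z = ι 3`: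
`xξ = q ξx`, `xθ = q θx`, `xz = zx`, `ξ² = 0`, `θ² = 0`, `ξθ = θξ`,
`ξz = −q⁻¹ zξ`, `θz = −q⁻¹ zθ`. -/
inductive Rel (q : ℂ) : FreeAlgebra ℂ (Fin 4) → FreeAlgebra ℂ (Fin 4) → Prop
  | x_xi : Rel q (FreeAlgebra.ι ℂ (0 : Fin 4) * FreeAlgebra.ι ℂ (1 : Fin 4))
      (q • (FreeAlgebra.ι ℂ (1 : Fin 4) * FreeAlgebra.ι ℂ (0 : Fin 4)))
  | x_th : Rel q (FreeAlgebra.ι ℂ (0 : Fin 4) * FreeAlgebra.ι ℂ (2 : Fin 4))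
      (q • (FreeAlgebra.ι ℂ (2 : Fin 4) * FreeAlgebra.ι ℂ (0 : Fin 4)))
  | x_z : Rel q (FreeAlgebra.ι ℂ (0 : Fin 4) * FreeAlgebra.ι ℂ (3 : Fin 4))
      (FreeAlgebra.ι ℂ (3 : Fin 4) * FreeAlgebra.ι ℂ (0 : Fin 4))
  | xi_sq : Rel q (FreeAlgebra.ι ℂ (1 : Fin 4) * FreeAlgebra.ι ℂ (1 : Fin 4)) 0
  | th_sq : Rel q (FreeAlgebra.ι ℂ (2 : Fin 4) * FreeAlgebra.ι ℂ (2 : Fin 4)) 0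
  | xi_th : Rel q (FreeAlgebra.ι ℂ (1 : Fin 4) * FreeAlgebra.ι ℂ (2 : Fin 4))
      (FreeAlgebra.ι ℂ (2 : Fin 4) * FreeAlgebra.ι ℂ (1 : Fin 4))
  | xi_z : Rel q (FreeAlgebra.ι ℂ (1 : Fin 4) * FreeAlgebra.ι ℂ (3 : Fin 4))
      ((-q⁻¹) • (FreeAlgebra.ι ℂ (3 : Fin 4) * FreeAlgebra.ι ℂ (1 : Fin 4)))
  | th_z : Rel q (FreeAlgebra.ι ℂ (2 : Fin 4) * FreeAlgebra.ι ℂ (3 : Fin 4))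
      ((-q⁻¹) • (FreeAlgebra.ι ℂ (3 : Fin 4) * FreeAlgebra.ι ℂ (2 : Fin 4)))

/-- The algebra of polynomials on the double-graded quantum superplane `ℝ_q(1|𝟏)`. -/
abbrev Aq (q : ℂ) : Type := RingQuot (Rel q)

/-- The generators of `A_q`. -/
noncomputable def gen (q : ℂ) (i : Fin 4) : Aq q :=
  RingQuot.mkAlgHom ℂ (Rel q) (FreeAlgebra.ι ℂ i)

/-- The generator `x`, of degree `(0,0)`. -/
noncomputable def X (q : ℂ) : Aq q := gen q 0
/-- The generator `ξ`, of degree `(0,1)`. -/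
noncomputable def Xi (q : ℂ) : Aq q := gen q 1
/-- The generator `θ`, of degree `(1,0)`. -/
noncomputable def Th (q : ℂ) : Aq q := gen q 2
/-- The generator `z`, of degree `(1,1)`. -/
noncomputable def Zg (q : ℂ) : Aq q := gen q 3

/-- The `ℤ₂ × ℤ₂`-degrees of the generators. -/
def dg : Fin 4 → ZMod 2 × ZMod 2 := ![(0, 0), (0, 1), (1, 0), (1, 1)]

/-- The homogeneous component of degree `γ` of `A_q`: the span of the images of the
words in the generators of total degree `γ`. -/
noncomputable def grading (q : ℂ) (γ : ZMod 2 × ZMod 2) : Submodule ℂ (Aq q) :=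
  Submodule.span ℂ
    { a | ∃ w : List (Fin 4), (w.map dg).sum = γ ∧ a = (w.map (gen q)).prod }

end DGQS

theorem mul_pow_mul_eq_smul_of_mul_eq_smul {R A : Type*} [CommSemiring R] [Semiring A]
    [Algebra R A] {a b : A} {c : R} (h : a * b = c • (b * a)) (m : ℕ) (t : A) :
    a * (b ^ m * t) = c ^ m • (b ^ m * (a * t)) := by
  induction m with
  | zero => simp
  | succ m ih =>
    rw [pow_succ', mul_assoc, ← mul_assoc a, h, smul_mul_assoc, mul_assoc, ih, mul_smul_comm,
      smul_smul, pow_succ', mul_assoc]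

namespace DGQS

variable {q : ℂ}

theorem X_mul_Xi : X q * Xi q = q • (Xi q * X q) := by
  simpa only [X, Xi, gen, map_mul, map_smul] using RingQuot.mkAlgHom_rel ℂ (Rel.x_xi (q := q))

theorem X_mul_Th : X q * Th q = q • (Th q * X q) := by
  simpa only [X, Th, gen, map_mul, map_smul] using RingQuot.mkAlgHom_rel ℂ (Rel.x_th (q := q))

theorem X_mul_Zg : X q * Zg q = Zg q * X q := by
  simpa only [X, Zg, gen, map_mul] using RingQuot.mkAlgHom_rel ℂ (Rel.x_z (q := q))

theorem Xi_mul_Xi : Xi q * Xi q = 0 := by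
  simpa only [Xi, gen, map_mul, map_zero] using RingQuot.mkAlgHom_rel ℂ (Rel.xi_sq (q := q))

theorem Th_mul_Th : Th q * Th q = 0 := by
  simpa only [Th, gen, map_mul, map_zero] using RingQuot.mkAlgHom_rel ℂ (Rel.th_sq (q := q))

theorem Xi_mul_Th : Xi q * Th q = Th q * Xi q := by
  simpa only [Xi, Th, gen, map_mul] using RingQuot.mkAlgHom_rel ℂ (Rel.xi_th (q := q))

theorem Xi_mul_Zg : Xi q * Zg q = (-q⁻¹) • (Zg q * Xi q) := by
  simpa only [Xi, Zg, gen, map_mul, map_smul] using RingQuot.mkAlgHom_rel ℂ (Rel.xi_z (q := q))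

theorem Th_mul_Zg : Th q * Zg q = (-q⁻¹) • (Zg q * Th q) := by
  simpa only [Th, Zg, gen, map_mul, map_smul] using RingQuot.mkAlgHom_rel ℂ (Rel.th_z (q := q))

theorem Xi_mul_X (hq : q ≠ 0) : Xi q * X q = q⁻¹ • (X q * Xi q) := by
  rw [X_mul_Xi, smul_smul, inv_mul_cancel₀ hq, one_smul]

theorem Th_mul_X (hq : q ≠ 0) : Th q * X q = q⁻¹ • (X q * Th q) := by
  rw [X_mul_Th, smul_smul, inv_mul_cancel₀ hq, one_smul]

theorem Zg_mul_Xi (hq : q ≠ 0) : Zg q * Xi q = (-q) • (Xi q * Zg q) := by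
  rw [Xi_mul_Zg, smul_smul, neg_mul_neg, mul_inv_cancel₀ hq, one_smul]

theorem Zg_mul_Th (hq : q ≠ 0) : Zg q * Th q = (-q) • (Th q * Zg q) := by
  rw [Th_mul_Zg, smul_smul, neg_mul_neg, mul_inv_cancel₀ hq, one_smul]

theorem Zg_mul_Xi_mul (hq : q ≠ 0) (t : Aq q) :
    Zg q * (Xi q * t) = (-q) • (Xi q * (Zg q * t)) := by
  rw [← mul_assoc, Zg_mul_Xi hq, smul_mul_assoc, mul_assoc]

theorem Zg_mul_Th_mul (hq : q ≠ 0) (t : Aq q) :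
    Zg q * (Th q * t) = (-q) • (Th q * (Zg q * t)) := by
  rw [← mul_assoc, Zg_mul_Th hq, smul_mul_assoc, mul_assoc]

noncomputable def mono (q : ℂ) (m : ℕ) (α β : Bool) (n : ℕ) : Aq q :=
  X q ^ m * Xi q ^ α.toNat * Th q ^ β.toNat * Zg q ^ n

theorem X_mul_mono (m : ℕ) (α β : Bool) (n : ℕ) :
    X q * mono q m α β n = mono q (m + 1) α β n := by
  simp only [mono, ← mul_assoc, ← pow_succ']

theorem Xi_mul_mono_true (hq : q ≠ 0) (m : ℕ) (β : Bool) (n : ℕ) :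
    Xi q * mono q m true β n = 0 := by
  simp only [mono, Bool.toNat_true, pow_one, mul_assoc]
  rw [mul_pow_mul_eq_smul_of_mul_eq_smul (Xi_mul_X hq), ← mul_assoc (Xi q), Xi_mul_Xi,
    zero_mul, mul_zero, smul_zero]

theorem Xi_mul_mono_false (hq : q ≠ 0) (m : ℕ) (β : Bool) (n : ℕ) :
    Xi q * mono q m false β n = q⁻¹ ^ m • mono q m true β n := by
  simp only [mono, Bool.toNat_true, Bool.toNat_false, pow_one, pow_zero, mul_one, mul_assoc]
  rw [mul_pow_mul_eq_smul_of_mul_eq_smul (Xi_mul_X hq)]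

theorem Th_mul_mono_true (hq : q ≠ 0) (m : ℕ) (α : Bool) (n : ℕ) :
    Th q * mono q m α true n = 0 := by
  simp only [mono, Bool.toNat_true, pow_one, mul_assoc]
  rw [mul_pow_mul_eq_smul_of_mul_eq_smul (Th_mul_X hq)]
  cases α
  · simp [← mul_assoc (Th q) (Th q), Th_mul_Th]
  · simp [← mul_assoc (Th q) (Xi q), ← Xi_mul_Th, mul_assoc, ← mul_assoc (Th q) (Th q),
      Th_mul_Th]

theorem Th_mul_mono_false (hq : q ≠ 0) (m : ℕ) (α : Bool) (n : ℕ) :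
    Th q * mono q m α false n = q⁻¹ ^ m • mono q m α true n := by
  simp only [mono, Bool.toNat_true, Bool.toNat_false, pow_one, pow_zero, mul_one, mul_assoc]
  rw [mul_pow_mul_eq_smul_of_mul_eq_smul (Th_mul_X hq)]
  cases α <;> simp [← mul_assoc, Xi_mul_Th]

theorem Zg_mul_mono (hq : q ≠ 0) (m : ℕ) (α β : Bool) (n : ℕ) :
    Zg q * mono q m α β n = (-q) ^ (α.toNat + β.toNat) • mono q m α β (n + 1) := by
  simp only [mono, mul_assoc]
  have hc : Commute (Zg q) (X q) := X_mul_Zg.symm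
  rw [(hc.pow_right m).left_comm]
  cases α <;> cases β <;>
    simp [pow_succ', Zg_mul_Xi_mul hq, Zg_mul_Th_mul hq, smul_smul]

noncomputable def pbwSpan (q : ℂ) : Submodule ℂ (Aq q) :=
  Submodule.span ℂ {a | ∃ m α β n, a = mono q m α β n}

theorem mono_mem_pbwSpan (m : ℕ) (α β : Bool) (n : ℕ) : mono q m α β n ∈ pbwSpan q :=
  Submodule.subset_span ⟨m, α, β, n, rfl⟩

theorem gen_mul_mono_mem_pbwSpan (hq : q ≠ 0) (i : Fin 4) (m : ℕ) (α β : Bool) (n : ℕ) :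
    gen q i * mono q m α β n ∈ pbwSpan q := by
  fin_cases i
  · exact X_mul_mono m α β n ▸ mono_mem_pbwSpan _ _ _ _
  · cases α
    · exact Xi_mul_mono_false hq m β n ▸ Submodule.smul_mem _ _ (mono_mem_pbwSpan _ _ _ _)
    · exact Xi_mul_mono_true hq m β n ▸ zero_mem _
  · cases β
    · exact Th_mul_mono_false hq m α n ▸ Submodule.smul_mem _ _ (mono_mem_pbwSpan _ _ _ _)
    · exact Th_mul_mono_true hq m α n ▸ zero_mem _
  · exact Zg_mul_mono hq m α β n ▸ Submodule.smul_mem _ _ (mono_mem_pbwSpan _ _ _ _)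

theorem mul_mem_pbwSpan (hq : q ≠ 0) (a : Aq q) {b : Aq q} (hb : b ∈ pbwSpan q) :
    a * b ∈ pbwSpan q := by
  obtain ⟨f, rfl⟩ := RingQuot.mkAlgHom_surjective ℂ (Rel q) a
  induction f using FreeAlgebra.induction generalizing b with
  | grade0 r =>
    rw [AlgHom.commutes, Algebra.algebraMap_eq_smul_one, smul_one_mul]
    exact Submodule.smul_mem _ _ hb
  | grade1 i =>
    have hle : pbwSpan q ≤ (pbwSpan q).comap (LinearMap.mulLeft ℂ (gen q i)) :=
      Submodule.span_le.mpr fun _ ⟨m, α, β, n, h⟩ =>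
        h ▸ gen_mul_mono_mem_pbwSpan hq i m α β n
    exact hle hb
  | mul f g hf hg => rw [map_mul, mul_assoc]; exact hf (hg hb)
  | add f g hf hg => rw [map_add, add_mul]; exact add_mem (hf hb) (hg hb)

theorem pbwSpan_eq_top (hq : q ≠ 0) : pbwSpan q = ⊤ := by
  refine eq_top_iff.mpr fun a _ => mul_one a ▸ mul_mem_pbwSpan hq a ?_
  simpa [mono] using mono_mem_pbwSpan (q := q) 0 false false 0

theorem linearMap_ext_mono {M : Type*} [AddCommMonoid M] [Module ℂ M] (hq : q ≠ 0)
    {f g : Aq q →ₗ[ℂ] M} (h : ∀ m α β n, f (mono q m α β n) = g (mono q m α β n)) :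
    f = g :=
  LinearMap.ext_on (pbwSpan_eq_top hq) fun _ ⟨m, α, β, n, hmono⟩ => hmono ▸ h m α β n

/- The operators `∂_x, ∂_ξ, ∂_θ, ∂_z` of the paper; the truncated `m - 1` and `n - 1` only
occur with coefficient `0`. -/
abbrev IsPartialX (q : ℂ) (D : Aq q →ₗ[ℂ] Aq q) : Prop :=
  ∀ m α β n, D (mono q m α β n) = (m : ℂ) • mono q (m - 1) α β n

abbrev IsPartialXi (q : ℂ) (D : Aq q →ₗ[ℂ] Aq q) : Prop :=
  ∀ m α β n, D (mono q m α β n) = ((α.toNat : ℂ) * q ^ m) • mono q m false β n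

abbrev IsPartialTh (q : ℂ) (D : Aq q →ₗ[ℂ] Aq q) : Prop :=
  ∀ m α β n, D (mono q m α β n) = ((β.toNat : ℂ) * q ^ m) • mono q m α false n

abbrev IsPartialZg (q : ℂ) (D : Aq q →ₗ[ℂ] Aq q) : Prop :=
  ∀ m α β n, D (mono q m α β n) =
    ((n : ℂ) * (-q⁻¹) ^ (α.toNat + β.toNat)) • mono q m α β (n - 1)

variable {D : Aq q →ₗ[ℂ] Aq q}

theorem IsPartialX.comp_mulLeft_X (hq : q ≠ 0) (hD : IsPartialX q D) :
    D ∘ₗ LinearMap.mulLeft ℂ (X q) = LinearMap.id + LinearMap.mulLeft ℂ (X q) ∘ₗ D :=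
  linearMap_ext_mono hq fun m α β n => by
    cases m
    · simp [hD, X_mul_mono]
    · simp [hD, X_mul_mono]
      module

theorem IsPartialX.comp_mulLeft_Xi (hq : q ≠ 0) (hD : IsPartialX q D) :
    D ∘ₗ LinearMap.mulLeft ℂ (Xi q) = q⁻¹ • (LinearMap.mulLeft ℂ (Xi q) ∘ₗ D) :=
  linearMap_ext_mono hq fun m α β n => by
    cases α <;> cases m <;>
      simp [hD, Xi_mul_mono_true hq, Xi_mul_mono_false hq, smul_smul]
    module

theorem IsPartialX.comp_mulLeft_Th (hq : q ≠ 0) (hD : IsPartialX q D) :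
    D ∘ₗ LinearMap.mulLeft ℂ (Th q) = q⁻¹ • (LinearMap.mulLeft ℂ (Th q) ∘ₗ D) :=
  linearMap_ext_mono hq fun m α β n => by
    cases β <;> cases m <;>
      simp [hD, Th_mul_mono_true hq, Th_mul_mono_false hq, smul_smul]
    module

theorem IsPartialX.comp_mulLeft_Zg (hq : q ≠ 0) (hD : IsPartialX q D) :
    D ∘ₗ LinearMap.mulLeft ℂ (Zg q) = LinearMap.mulLeft ℂ (Zg q) ∘ₗ D :=
  linearMap_ext_mono hq fun m α β n => by
    simp [hD, Zg_mul_mono hq]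
    module

theorem IsPartialXi.comp_mulLeft_X (hq : q ≠ 0) (hD : IsPartialXi q D) :
    D ∘ₗ LinearMap.mulLeft ℂ (X q) = q • (LinearMap.mulLeft ℂ (X q) ∘ₗ D) :=
  linearMap_ext_mono hq fun m α β n => by
    simp [hD, X_mul_mono]
    module

theorem IsPartialXi.comp_mulLeft_Xi (hq : q ≠ 0) (hD : IsPartialXi q D) :
    D ∘ₗ LinearMap.mulLeft ℂ (Xi q) = LinearMap.id - LinearMap.mulLeft ℂ (Xi q) ∘ₗ D :=
  linearMap_ext_mono hq fun m α β n => by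
    cases α <;> simp [hD, Xi_mul_mono_true hq, Xi_mul_mono_false hq, smul_smul, hq]

theorem IsPartialXi.comp_mulLeft_Th (hq : q ≠ 0) (hD : IsPartialXi q D) :
    D ∘ₗ LinearMap.mulLeft ℂ (Th q) = LinearMap.mulLeft ℂ (Th q) ∘ₗ D :=
  linearMap_ext_mono hq fun m α β n => by
    cases β <;> simp [hD, Th_mul_mono_true hq, Th_mul_mono_false hq, smul_smul]
    module

theorem IsPartialXi.comp_mulLeft_Zg (hq : q ≠ 0) (hD : IsPartialXi q D) :
    D ∘ₗ LinearMap.mulLeft ℂ (Zg q) = (-q) • (LinearMap.mulLeft ℂ (Zg q) ∘ₗ D) :=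
  linearMap_ext_mono hq fun m α β n => by
    cases α <;> cases β <;> simp [hD, Zg_mul_mono hq, smul_smul]
    module

theorem IsPartialTh.comp_mulLeft_X (hq : q ≠ 0) (hD : IsPartialTh q D) :
    D ∘ₗ LinearMap.mulLeft ℂ (X q) = q • (LinearMap.mulLeft ℂ (X q) ∘ₗ D) :=
  linearMap_ext_mono hq fun m α β n => by
    simp [hD, X_mul_mono]
    module

theorem IsPartialTh.comp_mulLeft_Xi (hq : q ≠ 0) (hD : IsPartialTh q D) :
    D ∘ₗ LinearMap.mulLeft ℂ (Xi q) = LinearMap.mulLeft ℂ (Xi q) ∘ₗ D :=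
  linearMap_ext_mono hq fun m α β n => by
    cases α <;> simp [hD, Xi_mul_mono_true hq, Xi_mul_mono_false hq, smul_smul]
    module

theorem IsPartialTh.comp_mulLeft_Th (hq : q ≠ 0) (hD : IsPartialTh q D) :
    D ∘ₗ LinearMap.mulLeft ℂ (Th q) = LinearMap.id - LinearMap.mulLeft ℂ (Th q) ∘ₗ D :=
  linearMap_ext_mono hq fun m α β n => by
    cases β <;> simp [hD, Th_mul_mono_true hq, Th_mul_mono_false hq, smul_smul, hq]

theorem IsPartialTh.comp_mulLeft_Zg (hq : q ≠ 0) (hD : IsPartialTh q D) :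
    D ∘ₗ LinearMap.mulLeft ℂ (Zg q) = (-q) • (LinearMap.mulLeft ℂ (Zg q) ∘ₗ D) :=
  linearMap_ext_mono hq fun m α β n => by
    cases α <;> cases β <;> simp [hD, Zg_mul_mono hq, smul_smul]
    module

theorem IsPartialZg.comp_mulLeft_X (hq : q ≠ 0) (hD : IsPartialZg q D) :
    D ∘ₗ LinearMap.mulLeft ℂ (X q) = LinearMap.mulLeft ℂ (X q) ∘ₗ D :=
  linearMap_ext_mono hq fun m α β n => by simp [hD, X_mul_mono]

theorem IsPartialZg.comp_mulLeft_Xi (hq : q ≠ 0) (hD : IsPartialZg q D) :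
    D ∘ₗ LinearMap.mulLeft ℂ (Xi q) = (-q⁻¹) • (LinearMap.mulLeft ℂ (Xi q) ∘ₗ D) :=
  linearMap_ext_mono hq fun m α β n => by
    cases α <;> cases β <;> cases n <;>
      simp [hD, Xi_mul_mono_true hq, Xi_mul_mono_false hq, smul_smul] <;> module

theorem IsPartialZg.comp_mulLeft_Th (hq : q ≠ 0) (hD : IsPartialZg q D) :
    D ∘ₗ LinearMap.mulLeft ℂ (Th q) = (-q⁻¹) • (LinearMap.mulLeft ℂ (Th q) ∘ₗ D) :=
  linearMap_ext_mono hq fun m α β n => by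
    cases α <;> cases β <;> cases n <;>
      simp [hD, Th_mul_mono_true hq, Th_mul_mono_false hq, smul_smul] <;> module

theorem IsPartialZg.comp_mulLeft_Zg (hq : q ≠ 0) (hD : IsPartialZg q D) :
    D ∘ₗ LinearMap.mulLeft ℂ (Zg q) = LinearMap.id + LinearMap.mulLeft ℂ (Zg q) ∘ₗ D :=
  linearMap_ext_mono hq fun m α β n => by
    cases α <;> cases β <;> cases n <;>
      simp [hD, Zg_mul_mono hq, smul_smul, hq] <;> field_simp <;> module

end DGQS

open DGQS in
theorem statement16_general (q : ℂ) (hq : q ≠ 0)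
    (Dx Dξ Dθ Dz : Aq q →ₗ[ℂ] Aq q)
    (hDx : ∀ (m n : ℕ) (α β : Bool),
      Dx (X q ^ m * Xi q ^ α.toNat * Th q ^ β.toNat * Zg q ^ n)
        = (m : ℂ) • (X q ^ (m - 1) * Xi q ^ α.toNat * Th q ^ β.toNat * Zg q ^ n))
    (hDξ : ∀ (m n : ℕ) (α β : Bool),
      Dξ (X q ^ m * Xi q ^ α.toNat * Th q ^ β.toNat * Zg q ^ n)
        = ((α.toNat : ℂ) * q ^ m) • (X q ^ m * Th q ^ β.toNat * Zg q ^ n))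
    (hDθ : ∀ (m n : ℕ) (α β : Bool),
      Dθ (X q ^ m * Xi q ^ α.toNat * Th q ^ β.toNat * Zg q ^ n)
        = ((β.toNat : ℂ) * q ^ m) • (X q ^ m * Xi q ^ α.toNat * Zg q ^ n))
    (hDz : ∀ (m n : ℕ) (α β : Bool),
      Dz (X q ^ m * Xi q ^ α.toNat * Th q ^ β.toNat * Zg q ^ n)
        = ((n : ℂ) * (-q⁻¹) ^ (α.toNat + β.toNat)) •
            (X q ^ m * Xi q ^ α.toNat * Th q ^ β.toNat * Zg q ^ (n - 1))) :
    -- commutation with `L_x`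
    Dx ∘ₗ LinearMap.mulLeft ℂ (X q) = LinearMap.id + LinearMap.mulLeft ℂ (X q) ∘ₗ Dx ∧
    Dξ ∘ₗ LinearMap.mulLeft ℂ (X q) = q • (LinearMap.mulLeft ℂ (X q) ∘ₗ Dξ) ∧
    Dθ ∘ₗ LinearMap.mulLeft ℂ (X q) = q • (LinearMap.mulLeft ℂ (X q) ∘ₗ Dθ) ∧
    Dz ∘ₗ LinearMap.mulLeft ℂ (X q) = LinearMap.mulLeft ℂ (X q) ∘ₗ Dz ∧
    -- commutation with `L_ξ`
    Dx ∘ₗ LinearMap.mulLeft ℂ (Xi q) = q⁻¹ • (LinearMap.mulLeft ℂ (Xi q) ∘ₗ Dx) ∧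
    Dξ ∘ₗ LinearMap.mulLeft ℂ (Xi q) = LinearMap.id - LinearMap.mulLeft ℂ (Xi q) ∘ₗ Dξ ∧
    Dθ ∘ₗ LinearMap.mulLeft ℂ (Xi q) = LinearMap.mulLeft ℂ (Xi q) ∘ₗ Dθ ∧
    Dz ∘ₗ LinearMap.mulLeft ℂ (Xi q) = (-q⁻¹) • (LinearMap.mulLeft ℂ (Xi q) ∘ₗ Dz) ∧
    -- commutation with `L_θ`
    Dx ∘ₗ LinearMap.mulLeft ℂ (Th q) = q⁻¹ • (LinearMap.mulLeft ℂ (Th q) ∘ₗ Dx) ∧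
    Dξ ∘ₗ LinearMap.mulLeft ℂ (Th q) = LinearMap.mulLeft ℂ (Th q) ∘ₗ Dξ ∧
    Dθ ∘ₗ LinearMap.mulLeft ℂ (Th q) = LinearMap.id - LinearMap.mulLeft ℂ (Th q) ∘ₗ Dθ ∧
    Dz ∘ₗ LinearMap.mulLeft ℂ (Th q) = (-q⁻¹) • (LinearMap.mulLeft ℂ (Th q) ∘ₗ Dz) ∧
    -- commutation with `L_z`
    Dx ∘ₗ LinearMap.mulLeft ℂ (Zg q) = LinearMap.mulLeft ℂ (Zg q) ∘ₗ Dx ∧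
    Dξ ∘ₗ LinearMap.mulLeft ℂ (Zg q) = (-q) • (LinearMap.mulLeft ℂ (Zg q) ∘ₗ Dξ) ∧
    Dθ ∘ₗ LinearMap.mulLeft ℂ (Zg q) = (-q) • (LinearMap.mulLeft ℂ (Zg q) ∘ₗ Dθ) ∧
    Dz ∘ₗ LinearMap.mulLeft ℂ (Zg q) = LinearMap.id + LinearMap.mulLeft ℂ (Zg q) ∘ₗ Dz := by
  have hx : IsPartialX q Dx := fun m α β n => hDx m n α β
  have hξ : IsPartialXi q Dξ := fun m α β n => by simpa [mono] using hDξ m n α β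
  have hθ : IsPartialTh q Dθ := fun m α β n => by simpa [mono] using hDθ m n α β
  have hz : IsPartialZg q Dz := fun m α β n => hDz m n α β
  exact ⟨hx.comp_mulLeft_X hq, hξ.comp_mulLeft_X hq, hθ.comp_mulLeft_X hq, hz.comp_mulLeft_X hq,
    hx.comp_mulLeft_Xi hq, hξ.comp_mulLeft_Xi hq, hθ.comp_mulLeft_Xi hq, hz.comp_mulLeft_Xi hq,
    hx.comp_mulLeft_Th hq, hξ.comp_mulLeft_Th hq, hθ.comp_mulLeft_Th hq, hz.comp_mulLeft_Th hq,
    hx.comp_mulLeft_Zg hq, hξ.comp_mulLeft_Zg hq, hθ.comp_mulLeft_Zg hq, hz.comp_mulLeft_Zg hq⟩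

open DGQS in
theorem statement16 (q : ℂ) (hq : q ≠ 0) (hqroot : ∀ n : ℕ, 0 < n → q ^ n ≠ 1)
    (Dx Dξ Dθ Dz : Aq q →ₗ[ℂ] Aq q)
    (hDx : ∀ (m n : ℕ) (α β : Bool),
      Dx (X q ^ m * Xi q ^ α.toNat * Th q ^ β.toNat * Zg q ^ n)
        = (m : ℂ) • (X q ^ (m - 1) * Xi q ^ α.toNat * Th q ^ β.toNat * Zg q ^ n))
    (hDξ : ∀ (m n : ℕ) (α β : Bool),
      Dξ (X q ^ m * Xi q ^ α.toNat * Th q ^ β.toNat * Zg q ^ n)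
        = ((α.toNat : ℂ) * q ^ m) • (X q ^ m * Th q ^ β.toNat * Zg q ^ n))
    (hDθ : ∀ (m n : ℕ) (α β : Bool),
      Dθ (X q ^ m * Xi q ^ α.toNat * Th q ^ β.toNat * Zg q ^ n)
        = ((β.toNat : ℂ) * q ^ m) • (X q ^ m * Xi q ^ α.toNat * Zg q ^ n))
    (hDz : ∀ (m n : ℕ) (α β : Bool),
      Dz (X q ^ m * Xi q ^ α.toNat * Th q ^ β.toNat * Zg q ^ n)
        = ((n : ℂ) * (-q⁻¹) ^ (α.toNat + β.toNat)) •
            (X q ^ m * Xi q ^ α.toNat * Th q ^ β.toNat * Zg q ^ (n - 1))) :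
    -- commutation with `L_x`
    Dx ∘ₗ LinearMap.mulLeft ℂ (X q) = LinearMap.id + LinearMap.mulLeft ℂ (X q) ∘ₗ Dx ∧
    Dξ ∘ₗ LinearMap.mulLeft ℂ (X q) = q • (LinearMap.mulLeft ℂ (X q) ∘ₗ Dξ) ∧
    Dθ ∘ₗ LinearMap.mulLeft ℂ (X q) = q • (LinearMap.mulLeft ℂ (X q) ∘ₗ Dθ) ∧
    Dz ∘ₗ LinearMap.mulLeft ℂ (X q) = LinearMap.mulLeft ℂ (X q) ∘ₗ Dz ∧
    -- commutation with `L_ξ`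
    Dx ∘ₗ LinearMap.mulLeft ℂ (Xi q) = q⁻¹ • (LinearMap.mulLeft ℂ (Xi q) ∘ₗ Dx) ∧
    Dξ ∘ₗ LinearMap.mulLeft ℂ (Xi q) = LinearMap.id - LinearMap.mulLeft ℂ (Xi q) ∘ₗ Dξ ∧
    Dθ ∘ₗ LinearMap.mulLeft ℂ (Xi q) = LinearMap.mulLeft ℂ (Xi q) ∘ₗ Dθ ∧
    Dz ∘ₗ LinearMap.mulLeft ℂ (Xi q) = (-q⁻¹) • (LinearMap.mulLeft ℂ (Xi q) ∘ₗ Dz) ∧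
    -- commutation with `L_θ`
    Dx ∘ₗ LinearMap.mulLeft ℂ (Th q) = q⁻¹ • (LinearMap.mulLeft ℂ (Th q) ∘ₗ Dx) ∧
    Dξ ∘ₗ LinearMap.mulLeft ℂ (Th q) = LinearMap.mulLeft ℂ (Th q) ∘ₗ Dξ ∧
    Dθ ∘ₗ LinearMap.mulLeft ℂ (Th q) = LinearMap.id - LinearMap.mulLeft ℂ (Th q) ∘ₗ Dθ ∧
    Dz ∘ₗ LinearMap.mulLeft ℂ (Th q) = (-q⁻¹) • (LinearMap.mulLeft ℂ (Th q) ∘ₗ Dz) ∧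
    -- commutation with `L_z`
    Dx ∘ₗ LinearMap.mulLeft ℂ (Zg q) = LinearMap.mulLeft ℂ (Zg q) ∘ₗ Dx ∧
    Dξ ∘ₗ LinearMap.mulLeft ℂ (Zg q) = (-q) • (LinearMap.mulLeft ℂ (Zg q) ∘ₗ Dξ) ∧
    Dθ ∘ₗ LinearMap.mulLeft ℂ (Zg q) = (-q) • (LinearMap.mulLeft ℂ (Zg q) ∘ₗ Dθ) ∧
    Dz ∘ₗ LinearMap.mulLeft ℂ (Zg q) = LinearMap.id + LinearMap.mulLeft ℂ (Zg q) ∘ₗ Dz :=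
  statement16_general q hq Dx Dξ Dθ Dz hDx hDξ hDθ hDz
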